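/- arXiv:2411.13394 — 3 statements merged into one kernel-verified Lean document; each statement's English description precedes it below -/
import Mathlib

section
/- Let L: R^d → R be Lipschitz with constant C, and let ρ, ρ̃ be Borel probability measures on R^d with finite second moments. For a ∈ (0,1], define the a-quantile q_a[ρ] := inf{ q : a ≤ ρ({θ : L(θ) ≤ q}) }. Then for any β ∈ (0,1], |∫_{β/2}^{β} q_a[ρ] da − ∫_{β/2}^{β} q_a[ρ̃] da| ≤ C·sqrt(β/2)·W₂(ρ, ρ̃), where W₂ denotes the 2-Wasserstein distance. -/
open MeasureTheory Filter

noncomputable section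

/-- The `a`-quantile of a measure `ρ` under the function `L`:
`q_a[ρ] := inf { q : a ≤ ρ({θ : L θ ≤ q}) }`. -/
def quantile {d : ℕ} (L : EuclideanSpace ℝ (Fin d) → ℝ)
    (ρ : Measure (EuclideanSpace ℝ (Fin d))) (a : ℝ) : ℝ :=
  sInf {q : ℝ | a ≤ (ρ {θ | L θ ≤ q}).toReal}

/-- The 2-Wasserstein distance between two measures on `ℝ^d`, defined as the infimum over
all couplings of the square root of the second moment of the displacement. -/
def W2 {d : ℕ} (μ ν : Measure (EuclideanSpace ℝ (Fin d))) : ℝ :=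
  sInf {c : ℝ |
    ∃ π : Measure (EuclideanSpace ℝ (Fin d) × EuclideanSpace ℝ (Fin d)),
      π.map Prod.fst = μ ∧ π.map Prod.snd = ν ∧
      c = Real.sqrt (∫ p, ‖p.1 - p.2‖ ^ 2 ∂π)}


/-!
Pushing `ρ` and `ρ'` forward by `L` reduces the problem to the real line, where `q_a[ρ]` is the
quantile function `Q_μ` of `μ = L_♯ρ`. Fix a coupling `π` of `ρ` and `ρ'` and put `X = L θ`,
`Y = L θ'`. Since `(x - y)₊²` is the area of the square `[y, x)²`, Tonelli's theorem turns
`∫₀¹ (Q_μ - Q_ν)²` and `E_π (X - Y)²` into integrals over `(s, t) ∈ ℝ²` of the measures of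
`{Q_ν ≤ s ⊓ t, s ⊔ t < Q_μ}` and `{Y ≤ s ⊓ t, s ⊔ t < X}`; the first is
`(F_ν (s ⊓ t) - F_μ (s ⊔ t))₊`, which is at most the second (Fréchet–Hoeffding). Hence
`∫₀¹ (Q_μ - Q_ν)² ≤ E_π (X - Y)² ≤ C² E_π ‖θ - θ'‖²`, and Cauchy–Schwarz on `(β/2, β)` followed
by the infimum over couplings gives the theorem.
-/

open ProbabilityTheory Set
open scoped ENNReal NNReal

theorem le_mul_sInf_of_nonneg {S : Set ℝ} (hS : S.Nonempty) {k x : ℝ} (hk : 0 ≤ k)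
    (h : ∀ c ∈ S, x ≤ k * c) : x ≤ k * sInf S := by
  rw [← smul_eq_mul, ← Real.sInf_smul_of_nonneg hk]
  exact le_csInf hS.smul_set fun _ ⟨c, hc, hkc⟩ => hkc ▸ h c hc

theorem abs_integral_le_sqrt_mul_sqrt {α : Type*} [MeasurableSpace α] {μ : Measure α}
    [IsFiniteMeasure μ] {f : α → ℝ} (hf : MemLp f 2 μ) :
    |∫ x, f x ∂μ| ≤ √(μ.real univ) * √(∫ x, f x ^ 2 ∂μ) := by
  have h2 : ENNReal.ofReal 2 = 2 := by norm_num
  calc |∫ x, f x ∂μ|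
      ≤ ∫ x, |f x| * 1 ∂μ := by simpa using abs_integral_le_integral_abs
    _ ≤ (∫ x, |f x| ^ (2 : ℝ) ∂μ) ^ (1 / 2 : ℝ) * (∫ _, (1 : ℝ) ^ (2 : ℝ) ∂μ) ^ (1 / 2 : ℝ) :=
        integral_mul_le_Lp_mul_Lq_of_nonneg Real.HolderConjugate.two_two
          (ae_of_all _ fun _ => abs_nonneg _) (ae_of_all _ fun _ => zero_le_one)
          (h2 ▸ hf.abs) (h2 ▸ memLp_const 1)
    _ = √(μ.real univ) * √(∫ x, f x ^ 2 ∂μ) := by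
        simp [Real.sqrt_eq_rpow, sq_abs, mul_comm]

theorem subsingleton_of_abs_sub_le_mul_norm {E : Type*} [NormedAddCommGroup E] {L : E → ℝ}
    {C : ℝ} (hC : C < 0) (hL : ∀ θ θ', |L θ - L θ'| ≤ C * ‖θ - θ'‖) : Subsingleton E :=
  ⟨fun θ θ' => sub_eq_zero.1 <| norm_le_zero_iff.1 <| by
    nlinarith [hL θ θ', abs_nonneg (L θ - L θ'), norm_nonneg (θ - θ')]⟩

theorem eq_of_isProbabilityMeasure_of_subsingleton {α : Type*} [MeasurableSpace α]
    [Subsingleton α] (μ ν : Measure α) [IsProbabilityMeasure μ] [IsProbabilityMeasure ν] :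
    μ = ν := by
  ext s -
  rcases s.eq_empty_or_nonempty with rfl | hs
  · simp
  · simp [hs.eq_univ]

theorem LipschitzWith.memLp_comp {E α : Type*} [NormedAddCommGroup E] [MeasurableSpace α]
    {μ : Measure α} [IsFiniteMeasure μ] {K : ℝ≥0} {L : E → ℝ} {p : ℝ≥0∞} {f : α → E}
    (hL : LipschitzWith K L) (hf : MemLp f p μ) :
    MemLp (L ∘ f) p μ := by
  refine ((hf.norm.const_mul K).add (memLp_const |L 0|)).of_le
    (hL.continuous.comp_aestronglyMeasurable hf.1) (ae_of_all _ fun x => ?_)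
  have := hL.norm_sub_le (f x) 0
  simp only [sub_zero, Real.norm_eq_abs, Function.comp_apply, Pi.add_apply] at this ⊢
  linarith [abs_sub_abs_le_abs_sub (L (f x)) (L 0), le_abs_self (K * ‖f x‖ + |L 0|)]

section LayerCake

theorem volume_Ico_prod_Ico_self (x y : ℝ) :
    volume (Ico y x ×ˢ Ico y x) = ENNReal.ofReal (x - y) ^ 2 := by
  rw [Measure.volume_eq_prod, Measure.prod_prod, Real.volume_Ico, sq]

theorem ofReal_sq_sub (x y : ℝ) :
    ENNReal.ofReal ((x - y) ^ 2) = ENNReal.ofReal (x - y) ^ 2 + ENNReal.ofReal (y - x) ^ 2 := by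
  rcases le_total x y with h | h
  · rw [ENNReal.ofReal_of_nonpos (sub_nonpos.2 h), ← neg_sub, neg_sq, ENNReal.ofReal_pow
      (sub_nonneg.2 h)]
    simp
  · rw [ENNReal.ofReal_of_nonpos (sub_nonpos.2 h), ENNReal.ofReal_pow (sub_nonneg.2 h)]
    simp

variable {Ω : Type*} [MeasurableSpace Ω] {m : Measure Ω} {f g : Ω → ℝ}

theorem lintegral_ofReal_sub_sq [SFinite m] (hf : Measurable f) (hg : Measurable g) :
    ∫⁻ ω, ENNReal.ofReal (f ω - g ω) ^ 2 ∂m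
      = ∫⁻ p : ℝ × ℝ, m {ω | g ω ≤ p.1 ⊓ p.2 ∧ p.1 ⊔ p.2 < f ω} := by
  set U : Set (Ω × ℝ × ℝ) := {q | g q.1 ≤ q.2.1 ⊓ q.2.2 ∧ q.2.1 ⊔ q.2.2 < f q.1}
  have hU : MeasurableSet U := by
    have h1 : Measurable fun q : Ω × ℝ × ℝ => q.2.1 := measurable_fst.comp measurable_snd
    have h2 : Measurable fun q : Ω × ℝ × ℝ => q.2.2 := measurable_snd.comp measurable_snd
    exact (measurableSet_le (hg.comp measurable_fst) (h1.min h2)).inter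
      (measurableSet_lt (h1.max h2) (hf.comp measurable_fst))
  calc ∫⁻ ω, ENNReal.ofReal (f ω - g ω) ^ 2 ∂m
      = ∫⁻ ω, volume (Prod.mk ω ⁻¹' U) ∂m := by
        refine lintegral_congr fun ω => ?_
        rw [← volume_Ico_prod_Ico_self]
        congr 1
        ext p
        simp [U, le_inf_iff, sup_lt_iff, and_and_and_comm]
    _ = ∫⁻ p : ℝ × ℝ, m {ω | g ω ≤ p.1 ⊓ p.2 ∧ p.1 ⊔ p.2 < f ω} := by
        rw [← Measure.prod_apply hU, Measure.prod_apply_symm hU]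
        rfl

theorem lintegral_ofReal_sq_sub [SFinite m] (hf : Measurable f) (hg : Measurable g) :
    ∫⁻ ω, ENNReal.ofReal ((f ω - g ω) ^ 2) ∂m
      = (∫⁻ p : ℝ × ℝ, m {ω | g ω ≤ p.1 ⊓ p.2 ∧ p.1 ⊔ p.2 < f ω})
        + ∫⁻ p : ℝ × ℝ, m {ω | f ω ≤ p.1 ⊓ p.2 ∧ p.1 ⊔ p.2 < g ω} := by
  simp only [ofReal_sq_sub]
  rw [lintegral_add_left (by fun_prop),
    lintegral_ofReal_sub_sq hf hg, lintegral_ofReal_sub_sq hg hf]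

end LayerCake

namespace ProbabilityTheory

/-- Outside `(0, 1)` the infimum would be over an empty or unbounded set; the value there is
set to `0`. -/
def cdfInv (μ : Measure ℝ) (a : ℝ) : ℝ :=
  if a ∈ Ioo 0 1 then sInf {x | a ≤ cdf μ x} else 0

section Quantile

variable {μ : Measure ℝ} {a x : ℝ}

theorem cdfInv_le_iff (ha : a ∈ Ioo 0 1) : cdfInv μ a ≤ x ↔ a ≤ cdf μ x := by
  set S := {x | a ≤ cdf μ x}
  have hne : S.Nonempty := ((tendsto_order.1 (tendsto_cdf_atTop μ)).1 a ha.2).exists.imp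
    fun _ => le_of_lt
  have hbdd : BddBelow S := by
    obtain ⟨y, hy⟩ := ((tendsto_order.1 (tendsto_cdf_atBot μ)).2 a ha.1).exists
    exact ⟨y, fun x hx => le_of_not_gt fun hxy => (hx.trans (monotone_cdf μ hxy.le)).not_gt hy⟩
  have hmem : sInf S ∈ S := by
    refine ge_of_tendsto (((cdf μ).right_continuous _).tendsto.mono_left
      (nhdsWithin_mono _ Ioi_subset_Ici_self)) ?_
    filter_upwards [self_mem_nhdsWithin] with x hx
    obtain ⟨y, hy, hyx⟩ := exists_lt_of_csInf_lt hne hx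
    exact hy.trans (monotone_cdf μ hyx.le)
  rw [cdfInv, if_pos ha]
  exact ⟨fun h => hmem.trans (monotone_cdf μ h), fun h => csInf_le hbdd h⟩

theorem lt_cdfInv_iff (ha : a ∈ Ioo 0 1) : x < cdfInv μ a ↔ cdf μ x < a := by
  simpa only [not_le] using (cdfInv_le_iff ha).not

@[fun_prop]
theorem measurable_cdfInv : Measurable (cdfInv μ) := by
  refine measurable_of_Iic fun x => ?_
  have : cdfInv μ ⁻¹' Iic x = Ioo 0 1 ∩ Iic (cdf μ x) ∪ (Ioo 0 1)ᶜ ∩ {_a | 0 ≤ x} := by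
    ext a
    by_cases ha : a ∈ Ioo 0 1
    · simp [ha, cdfInv_le_iff ha]
    · simp [ha, cdfInv]
  rw [this]
  exact (measurableSet_Ioo.inter measurableSet_Iic).union
    (measurableSet_Ioo.compl.inter (MeasurableSet.const _))

theorem map_cdfInv_volume_Ioo [IsProbabilityMeasure μ] :
    (volume.restrict (Ioo 0 1)).map (cdfInv μ) = μ := by
  refine Measure.ext_of_Iic _ _ fun x => ?_
  have hx : cdf μ x ≤ 1 := cdf_le_one μ x
  have : cdfInv μ ⁻¹' Iic x ∩ Ioo 0 1 = Ioc 0 (cdf μ x) \ {1} := by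
    ext a
    simp only [mem_inter_iff, mem_preimage, mem_Iic, mem_Ioc, Set.mem_sdiff, mem_singleton_iff]
    constructor
    · rintro ⟨h, ha⟩
      exact ⟨⟨ha.1, (cdfInv_le_iff ha).1 h⟩, ha.2.ne⟩
    · rintro ⟨⟨h0, h⟩, h1⟩
      have ha : a ∈ Ioo 0 1 := ⟨h0, lt_of_le_of_ne (h.trans hx) h1⟩
      exact ⟨(cdfInv_le_iff ha).2 h, ha⟩
  rw [Measure.map_apply measurable_cdfInv measurableSet_Iic,
    Measure.restrict_apply (measurableSet_Iic.preimage measurable_cdfInv), this,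
    measure_sdiff_null (measure_singleton 1), Real.volume_Ioc, sub_zero, cdf_eq_real,
    ofReal_measureReal]

theorem memLp_cdfInv {μ : Measure ℝ} [IsProbabilityMeasure μ] (h : MemLp id 2 μ) :
    MemLp (cdfInv μ) 2 (volume.restrict (Ioo 0 1)) :=
  (memLp_map_measure_iff aestronglyMeasurable_id measurable_cdfInv.aemeasurable).1
    (by rwa [map_cdfInv_volume_Ioo])

end Quantile

section Coupling

variable {Ω : Type*} [MeasurableSpace Ω] (m : Measure Ω) [IsProbabilityMeasure m]
  {X Y : Ω → ℝ}

theorem volume_cdfInv_le_lt_cdfInv_le (hX : Measurable X) (hY : Measurable Y) (s t : ℝ) :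
    volume.restrict (Ioo 0 1) {a | cdfInv (m.map Y) a ≤ s ∧ t < cdfInv (m.map X) a}
      ≤ m {ω | Y ω ≤ s ∧ t < X ω} := by
  have : IsProbabilityMeasure (m.map X) := Measure.isProbabilityMeasure_map hX.aemeasurable
  have : IsProbabilityMeasure (m.map Y) := Measure.isProbabilityMeasure_map hY.aemeasurable
  rw [Measure.restrict_apply' measurableSet_Ioo]
  calc volume ({a | cdfInv (m.map Y) a ≤ s ∧ t < cdfInv (m.map X) a} ∩ Ioo 0 1)
      ≤ volume (Ioc (cdf (m.map X) t) (cdf (m.map Y) s)) := by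
        refine measure_mono fun a ⟨⟨hs, ht⟩, ha⟩ => ?_
        exact ⟨(lt_cdfInv_iff ha).1 ht, (cdfInv_le_iff ha).1 hs⟩
    _ = ENNReal.ofReal (m.real (Y ⁻¹' Iic s) - m.real (X ⁻¹' Iic t)) := by
        rw [Real.volume_Ioc, cdf_eq_real, cdf_eq_real, map_measureReal_apply hX measurableSet_Iic,
          map_measureReal_apply hY measurableSet_Iic]
    _ ≤ ENNReal.ofReal (m.real (Y ⁻¹' Iic s \ X ⁻¹' Iic t)) :=
        ENNReal.ofReal_le_ofReal le_measureReal_sdiff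
    _ = m {ω | Y ω ≤ s ∧ t < X ω} := by
        rw [ofReal_measureReal]
        congr 1
        ext ω
        simp [not_le]

theorem lintegral_sq_cdfInv_sub_le (hX : Measurable X) (hY : Measurable Y) :
    ∫⁻ a in Ioo 0 1, ENNReal.ofReal ((cdfInv (m.map X) a - cdfInv (m.map Y) a) ^ 2)
      ≤ ∫⁻ ω, ENNReal.ofReal ((X ω - Y ω) ^ 2) ∂m := by
  rw [lintegral_ofReal_sq_sub measurable_cdfInv measurable_cdfInv, lintegral_ofReal_sq_sub hX hY]
  exact add_le_add (lintegral_mono fun p => volume_cdfInv_le_lt_cdfInv_le m hX hY _ _)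
    (lintegral_mono fun p => volume_cdfInv_le_lt_cdfInv_le m hY hX _ _)

theorem integral_sq_cdfInv_sub_le (hX : Measurable X) (hY : Measurable Y) (hX2 : MemLp X 2 m)
    (hY2 : MemLp Y 2 m) :
    ∫ a in Ioo 0 1, (cdfInv (m.map X) a - cdfInv (m.map Y) a) ^ 2
      ≤ ∫ ω, (X ω - Y ω) ^ 2 ∂m := by
  rw [integral_eq_lintegral_of_nonneg_ae (ae_of_all _ fun _ => sq_nonneg _) (by fun_prop),
    integral_eq_lintegral_of_nonneg_ae (ae_of_all _ fun _ => sq_nonneg _) (by fun_prop)]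
  exact ENNReal.toReal_mono (hX2.sub hY2).integrable_sq.lintegral_lt_top.ne
    (lintegral_sq_cdfInv_sub_le m hX hY)

theorem abs_setIntegral_cdfInv_sub_le (hX : Measurable X) (hY : Measurable Y)
    (hX2 : MemLp X 2 m) (hY2 : MemLp Y 2 m) {s : Set ℝ} (hs : s ⊆ Ioo 0 1) :
    |(∫ a in s, cdfInv (m.map X) a) - ∫ a in s, cdfInv (m.map Y) a|
      ≤ √(volume.real s) * √(∫ ω, (X ω - Y ω) ^ 2 ∂m) := by
  have hQ {Z : Ω → ℝ} (hZ : Measurable Z) (hZ2 : MemLp Z 2 m) :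
      MemLp (cdfInv (m.map Z)) 2 (volume.restrict (Ioo 0 1)) :=
    have := Measure.isProbabilityMeasure_map (μ := m) hZ.aemeasurable
    memLp_cdfInv ((memLp_map_measure_iff aestronglyMeasurable_id hZ.aemeasurable).2 hZ2)
  have hsub : volume.restrict s ≤ volume.restrict (Ioo 0 1) := Measure.restrict_mono hs le_rfl
  have : IsFiniteMeasure (volume.restrict s) :=
    isFiniteMeasure_restrict.2 ((measure_mono hs).trans_lt (by simp)).ne
  have hD := (hQ hX hX2).sub (hQ hY hY2)
  rw [← integral_sub (((hQ hX hX2).mono_measure hsub).integrable one_le_two)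
    (((hQ hY hY2).mono_measure hsub).integrable one_le_two)]
  calc _ ≤ √(volume.real s) * √(∫ a in s, (cdfInv (m.map X) a - cdfInv (m.map Y) a) ^ 2) := by
        simpa using abs_integral_le_sqrt_mul_sqrt (hD.mono_measure hsub)
    _ ≤ √(volume.real s) * √(∫ a in Ioo 0 1, (cdfInv (m.map X) a - cdfInv (m.map Y) a) ^ 2) := by
        gcongr
        · exact ae_of_all _ fun _ => sq_nonneg _
        · exact hD.integrable_sq
    _ ≤ √(volume.real s) * √(∫ ω, (X ω - Y ω) ^ 2 ∂m) := by
        gcongr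
        exact integral_sq_cdfInv_sub_le m hX hY hX2 hY2

end Coupling

end ProbabilityTheory

theorem LipschitzWith.abs_setIntegral_cdfInv_map_sub_le {E : Type*} [NormedAddCommGroup E]
    [MeasurableSpace E] [BorelSpace E] [SecondCountableTopology E] {K : ℝ≥0} {L : E → ℝ}
    (hL : LipschitzWith K L) {ρ ρ' : Measure E} [IsProbabilityMeasure ρ] (hρ : MemLp id 2 ρ)
    (hρ' : MemLp id 2 ρ')
    {π : Measure (E × E)} (hπ : π.map Prod.fst = ρ) (hπ' : π.map Prod.snd = ρ')
    {s : Set ℝ} (hs : s ⊆ Ioo 0 1) :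
    |(∫ a in s, cdfInv (ρ.map L) a) - ∫ a in s, cdfInv (ρ'.map L) a|
      ≤ √(volume.real s) * (K * √(∫ p, ‖p.1 - p.2‖ ^ 2 ∂π)) := by
  have : IsProbabilityMeasure (π.map Prod.fst) := hπ ▸ ‹_›
  have : IsProbabilityMeasure π := Measure.isProbabilityMeasure_of_map Prod.fst
  have hLm : Measurable L := hL.continuous.measurable
  have h1 : MemLp Prod.fst 2 π :=
    (memLp_map_measure_iff aestronglyMeasurable_id measurable_fst.aemeasurable).1 (hπ ▸ hρ)
  have h2 : MemLp Prod.snd 2 π :=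
    (memLp_map_measure_iff aestronglyMeasurable_id measurable_snd.aemeasurable).1 (hπ' ▸ hρ')
  have hbound : ∫ p, (L p.1 - L p.2) ^ 2 ∂π ≤ K ^ 2 * ∫ p, ‖p.1 - p.2‖ ^ 2 ∂π := by
    rw [← integral_const_mul]
    refine integral_mono (hL.memLp_comp h1 |>.sub (hL.memLp_comp h2)).integrable_sq
      (((memLp_two_iff_integrable_sq_norm (h1.sub h2).1).1 (h1.sub h2)).const_mul _)
      fun p => ?_
    rw [← sq_abs, ← mul_pow]
    exact pow_le_pow_left₀ (abs_nonneg _) (by simpa [dist_eq_norm] using hL.dist_le_mul p.1 p.2) 2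
  calc |(∫ a in s, cdfInv (ρ.map L) a) - ∫ a in s, cdfInv (ρ'.map L) a|
      ≤ √(volume.real s) * √(∫ p, (L p.1 - L p.2) ^ 2 ∂π) := by
        rw [← hπ, ← hπ', Measure.map_map hLm measurable_fst, Measure.map_map hLm measurable_snd]
        exact abs_setIntegral_cdfInv_sub_le π (hLm.comp measurable_fst)
          (hLm.comp measurable_snd) (hL.memLp_comp h1) (hL.memLp_comp h2) hs
    _ ≤ √(volume.real s) * (K * √(∫ p, ‖p.1 - p.2‖ ^ 2 ∂π)) := by
        gcongr
        rw [← Real.sqrt_sq K.coe_nonneg, ← Real.sqrt_mul (sq_nonneg _)]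
        exact Real.sqrt_le_sqrt hbound

section Euclidean

variable {d : ℕ} {L : EuclideanSpace ℝ (Fin d) → ℝ} {ρ : Measure (EuclideanSpace ℝ (Fin d))}

theorem W2_of_subsingleton [Subsingleton (EuclideanSpace ℝ (Fin d))]
    (μ ν : Measure (EuclideanSpace ℝ (Fin d))) : W2 μ ν = 0 := by
  have hcost : (fun p : EuclideanSpace ℝ (Fin d) × EuclideanSpace ℝ (Fin d) =>
      ‖p.1 - p.2‖ ^ 2) = 0 := funext fun p => by simp [Subsingleton.elim p.1 p.2]
  refine le_antisymm (Real.sInf_nonpos ?_) (Real.sInf_nonneg ?_) <;>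
    rintro _ ⟨π, -, -, rfl⟩ <;> simp [hcost]

theorem quantile_eq_cdfInv_map [IsProbabilityMeasure ρ] (hL : Measurable L) {a : ℝ}
    (ha : a ∈ Ioo 0 1) : quantile L ρ a = cdfInv (ρ.map L) a := by
  have := Measure.isProbabilityMeasure_map (μ := ρ) hL.aemeasurable
  simp_rw [cdfInv, if_pos ha, quantile, cdf_eq_real, map_measureReal_apply hL measurableSet_Iic]
  rfl

theorem intervalIntegral_quantile_eq [IsProbabilityMeasure ρ] (hL : Measurable L) {u v : ℝ}
    (hu : 0 ≤ u) (huv : u ≤ v) (hv : v ≤ 1) :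
    ∫ a in u..v, quantile L ρ a = ∫ a in Ioo u v, cdfInv (ρ.map L) a := by
  rw [intervalIntegral.integral_of_le huv, integral_Ioc_eq_integral_Ioo]
  exact setIntegral_congr_fun measurableSet_Ioo fun a ha =>
    quantile_eq_cdfInv_map hL ⟨hu.trans_lt ha.1, ha.2.trans_le hv⟩

end Euclidean

/-- If `L` is Lipschitz with constant `C` and `ρ, ρ'` are Borel probability
measures with finite second moments, then for every `β ∈ (0,1]`,
`|∫_{β/2}^β q_a[ρ] da − ∫_{β/2}^β q_a[ρ'] da| ≤ C · √(β/2) · W₂(ρ, ρ')`. -/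
theorem quantile_integral_wasserstein_stability {d : ℕ}
    (L : EuclideanSpace ℝ (Fin d) → ℝ) (C : ℝ)
    (hL : ∀ θ θ', |L θ - L θ'| ≤ C * ‖θ - θ'‖)
    (ρ ρ' : Measure (EuclideanSpace ℝ (Fin d)))
    [IsProbabilityMeasure ρ] [IsProbabilityMeasure ρ']
    (hρ : Integrable (fun θ => ‖θ‖ ^ 2) ρ)
    (hρ' : Integrable (fun θ => ‖θ‖ ^ 2) ρ')
    (β : ℝ) (hβ : β ∈ Set.Ioc (0 : ℝ) 1) :
    |(∫ a in (β/2)..β, quantile L ρ a) - ∫ a in (β/2)..β, quantile L ρ' a|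
      ≤ C * Real.sqrt (β / 2) * W2 ρ ρ' := by
  obtain ⟨hβ0, hβ1⟩ := hβ
  rcases lt_or_ge C 0 with hC | hC
  · have := subsingleton_of_abs_sub_le_mul_norm hC hL
    rw [eq_of_isProbabilityMeasure_of_subsingleton ρ ρ', W2_of_subsingleton, sub_self, abs_zero,
      mul_zero]
  have hLip : LipschitzWith C.toNNReal L := LipschitzWith.of_dist_le_mul fun θ θ' => by
    rw [Real.coe_toNNReal _ hC, Real.dist_eq, dist_eq_norm]
    exact hL θ θ'
  have hs : Ioo (β / 2) β ⊆ Ioo 0 1 := Ioo_subset_Ioo (by linarith) hβ1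
  have hvol : volume.real (Ioo (β / 2) β) = β / 2 := by
    rw [Real.volume_real_Ioo_of_le (by linarith)]
    ring
  rw [intervalIntegral_quantile_eq hLip.continuous.measurable (by linarith) (by linarith) hβ1,
    intervalIntegral_quantile_eq hLip.continuous.measurable (by linarith) (by linarith) hβ1, W2]
  refine le_mul_sInf_of_nonneg ?_ (by positivity) ?_
  · exact ⟨_, ρ.prod ρ', by simp, by simp, rfl⟩
  rintro _ ⟨π, hπ, hπ', rfl⟩
  have := hLip.abs_setIntegral_cdfInv_map_sub_le
    ((memLp_two_iff_integrable_sq_norm aestronglyMeasurable_id).2 hρ)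
    ((memLp_two_iff_integrable_sq_norm aestronglyMeasurable_id).2 hρ') hπ hπ' hs
  rw [hvol, Real.coe_toNNReal _ hC] at this
  linarith

end
end

section
/- Let L: R^d → R be continuous with infimum L̲ and minimizer set Θ, satisfying the inverse continuity property: there exist L_∞, R_L, η > 0, ν ∈ (0,∞) such that dist(θ, Θ) ≤ (1/η)(L(θ) − L̲)^ν for all θ ∈ N_{R_L}(Θ) and L(θ) − L̲ > L_∞ for all θ ∉ N_{R_L}(Θ). Let ρ be a probability measure, β ∈ (0,1), δ_q > 0, and suppose q_β[ρ] + δ_q ≤ L̲ + min{L_∞, (η r_G)^{1/ν}} for some r_G > 0. Then the sub-level set Q := {θ ∈ B_R(0) : L(θ) ≤ (2/β)∫_{β/2}^{β} q_a[ρ] da + δ_q} satisfies Q ⊆ N_{r_G}(Θ). -/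
open MeasureTheory Metric

noncomputable section

/-- Under the inverse continuity property of `L` with respect to its
minimizer set `Θ = {θ : L θ = inf L}`, if `q_β[ρ] + δ_q ≤ L̲ + min{L_∞, (η r_G)^{1/ν}}`,
then the sub-level set `Q = {θ ∈ B_R(0) : L θ ≤ (2/β)∫_{β/2}^β q_a[ρ] da + δ_q}` is
contained in the `r_G`-neighborhood `N_{r_G}(Θ)` of `Θ`. -/
theorem sublevel_subset_neighborhood {d : ℕ}
    (L : EuclideanSpace ℝ (Fin d) → ℝ) (hL : Continuous L)
    (hbdd : BddBelow (Set.range L))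
    (Linf RL η ν rG δq R β : ℝ)
    (hLinf : 0 < Linf) (hRL : 0 < RL) (hη : 0 < η) (hν : 0 < ν)
    (hrG : 0 < rG) (hδq : 0 < δq) (hβ : β ∈ Set.Ioo (0 : ℝ) 1)
    (hicp1 : ∀ θ, Metric.infDist θ {θ' | L θ' = sInf (Set.range L)} ≤ RL →
      Metric.infDist θ {θ' | L θ' = sInf (Set.range L)}
        ≤ (1 / η) * (L θ - sInf (Set.range L)) ^ ν)
    (hicp2 : ∀ θ, ¬ Metric.infDist θ {θ' | L θ' = sInf (Set.range L)} ≤ RL →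
      Linf < L θ - sInf (Set.range L))
    (ρ : Measure (EuclideanSpace ℝ (Fin d))) [IsProbabilityMeasure ρ]
    (hq : quantile L ρ β + δq ≤ sInf (Set.range L) + min Linf ((η * rG) ^ (1 / ν))) :
    {θ ∈ closedBall (0 : EuclideanSpace ℝ (Fin d)) R |
        L θ ≤ (2 / β) * (∫ a in (β / 2)..β, quantile L ρ a) + δq}
      ⊆ {θ | Metric.infDist θ {θ' | L θ' = sInf (Set.range L)} ≤ rG} := by
  obtain ⟨hβ0, hβ1⟩ := hβ
  set Lb := sInf (Set.range L) with hLb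
  -- L is bounded below by Lb
  have hLble : ∀ θ, Lb ≤ L θ := fun θ => csInf_le hbdd ⟨θ, rfl⟩
  -- the quantile sets
  set S : ℝ → Set ℝ := fun a => {q : ℝ | a ≤ (ρ {θ | L θ ≤ q}).toReal} with hS
  -- S a is bounded below by Lb for a > 0
  have hSbdd : ∀ a : ℝ, 0 < a → BddBelow (S a) := by
    intro a ha
    refine ⟨Lb, fun q hq' => ?_⟩
    by_contra hlt
    push_neg at hlt
    have : {θ | L θ ≤ q} = ∅ := by
      ext θ; simp only [Set.mem_setOf_eq, Set.mem_empty_iff_false, iff_false]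
      exact fun h => absurd (le_trans (hLble θ) h) (not_le.mpr hlt)
    have hq'' : a ≤ (ρ {θ | L θ ≤ q}).toReal := hq'
    rw [this, measure_empty] at hq''
    simp at hq''
    exact absurd hq'' (not_le.mpr ha)
  -- S β is nonempty
  have hSβne : (S β).Nonempty := by
    have hmono : Monotone (fun n : ℕ => {θ : EuclideanSpace ℝ (Fin d) | L θ ≤ n}) := by
      intro m n hmn θ hθ
      simp only [Set.mem_setOf_eq] at hθ ⊢
      exact le_trans hθ (Nat.cast_le.mpr hmn)
    have hUnion : (⋃ n : ℕ, {θ : EuclideanSpace ℝ (Fin d) | L θ ≤ n}) = Set.univ := by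
      ext θ; simp only [Set.mem_iUnion, Set.mem_setOf_eq, Set.mem_univ, iff_true]
      exact exists_nat_ge (L θ)
    have htend := tendsto_measure_iUnion_atTop (μ := ρ) hmono
    rw [hUnion, measure_univ] at htend
    have hlt : ENNReal.ofReal β < 1 := by
      rw [← ENNReal.ofReal_one]
      exact ENNReal.ofReal_lt_ofReal_iff one_pos |>.mpr hβ1
    have := htend.eventually (eventually_gt_nhds hlt)
    obtain ⟨n, hn⟩ := this.exists
    refine ⟨n, ?_⟩
    simp only [S, Set.mem_setOf_eq]
    have hne : ρ {θ | L θ ≤ (n : ℝ)} ≠ ⊤ := measure_ne_top ρ _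
    have : ENNReal.ofReal β ≤ ρ {θ | L θ ≤ (n : ℝ)} := le_of_lt hn
    calc β = (ENNReal.ofReal β).toReal := by rw [ENNReal.toReal_ofReal hβ0.le]
      _ ≤ (ρ {θ | L θ ≤ (n : ℝ)}).toReal := ENNReal.toReal_mono hne this
  -- quantile monotone on (0, β]
  have hmonoq : ∀ a ∈ Set.Icc (β/2) β, quantile L ρ a ≤ quantile L ρ β := by
    intro a ⟨ha1, ha2⟩
    have ha0 : 0 < a := lt_of_lt_of_le (by linarith) ha1
    apply csInf_le_csInf (hSbdd a ha0) hSβne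
    intro q hq'
    exact le_trans ha2 hq'
  have hmonoOn : MonotoneOn (quantile L ρ) (Set.uIcc (β/2) β) := by
    intro a ha b hb hab
    rw [Set.uIcc_of_le (by linarith : β/2 ≤ β)] at ha hb
    have ha0 : 0 < a := lt_of_lt_of_le (by linarith) ha.1
    obtain ⟨q0, hq0⟩ := hSβne
    exact csInf_le_csInf (hSbdd a ha0) ⟨q0, le_trans hb.2 hq0⟩
      (fun q hq' => le_trans hab hq')
  -- integrability
  have hInt : IntervalIntegrable (quantile L ρ) volume (β/2) β :=
    hmonoOn.intervalIntegrable
  have hIntc : IntervalIntegrable (fun _ : ℝ => quantile L ρ β) volume (β/2) β :=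
    intervalIntegrable_const
  -- integral bound
  have hintle : (∫ a in (β/2)..β, quantile L ρ a) ≤ (β - β/2) * quantile L ρ β := by
    have := intervalIntegral.integral_mono_on (by linarith : β/2 ≤ β) hInt hIntc hmonoq
    rwa [intervalIntegral.integral_const, smul_eq_mul] at this
  have hqq : (2 / β) * (∫ a in (β/2)..β, quantile L ρ a) ≤ quantile L ρ β := by
    have h2β : 0 < 2 / β := by positivity
    calc (2 / β) * (∫ a in (β/2)..β, quantile L ρ a)
        ≤ (2 / β) * ((β - β/2) * quantile L ρ β) := by
          exact mul_le_mul_of_nonneg_left hintle h2β.le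
      _ = quantile L ρ β := by field_simp; ring
  -- main argument
  intro θ hθ
  obtain ⟨hθball, hθL⟩ := hθ
  have h1 : L θ ≤ quantile L ρ β + δq := le_trans hθL (by linarith)
  have h2 : L θ - Lb ≤ min Linf ((η * rG) ^ (1 / ν)) := by linarith
  have hd : Metric.infDist θ {θ' | L θ' = Lb} ≤ RL := by
    by_contra h
    have := hicp2 θ h
    have := le_trans h2 (min_le_left _ _)
    linarith
  have h3 := hicp1 θ hd
  have hnn : 0 ≤ L θ - Lb := sub_nonneg.mpr (hLble θ)
  have h4 : (L θ - Lb) ^ ν ≤ ((η * rG) ^ (1 / ν)) ^ ν :=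
    Real.rpow_le_rpow hnn (le_trans h2 (min_le_right _ _)) hν.le
  have h5 : ((η * rG) ^ (1 / ν)) ^ ν = η * rG := by
    rw [← Real.rpow_mul (by positivity), one_div_mul_cancel hν.ne', Real.rpow_one]
  have h6 : Metric.infDist θ {θ' | L θ' = Lb} ≤ (1 / η) * (η * rG) := by
    calc Metric.infDist θ {θ' | L θ' = Lb} ≤ (1 / η) * (L θ - Lb) ^ ν := h3
      _ ≤ (1 / η) * (η * rG) := by
          rw [← h5]; exact mul_le_mul_of_nonneg_left h4 (by positivity)
  have : (1 / η) * (η * rG) = rG := by field_simp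
  rw [this] at h6
  exact h6

end
end

section
/- Let G: R^d → R be continuous with inf G > −∞, satisfying G(θ) − inf G ≤ C(1 + ‖θ‖₂²) for all θ. Let ρ, ρ̃ be probability densities in L^∞(R^d) ∩ P₂(R^d) with second moments bounded by K and such that ρ(Q[ρ]) ≥ c and ρ̃(Q[ρ̃]) ≥ c for measurable sets Q[ρ], Q[ρ̃] ⊆ B_R(0) determined by the quantile construction. Suppose additionally the auxiliary estimate ‖∫_{Q[ρ]} f ρ dθ − ∫_{Q[ρ̃]} f ρ̃ dθ‖₂ ≤ C̃(‖ρ − ρ̃‖_{L²(B_R(0))} + W₂(ρ, ρ̃)) holds for all bounded measurable f with sup_{B_R(0)}‖f‖₂ ≤ M (with C̃ depending on R, M, ‖ρ̃‖_{L^∞}). Then the consensus points m[ρ] := ∫_{Q[ρ]} θ e^{−αG(θ)} ρ dθ / ∫_{Q[ρ]} e^{−αG(θ)} ρ dθ satisfy ‖m[ρ] − m[ρ̃]‖₂ ≤ C(‖ρ − ρ̃‖_{L²(B_R(0))} + W₂(ρ, ρ̃)), with C depending only on R, K, c, α, and C̃. -/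
open MeasureTheory Metric

noncomputable section

/-- The consensus point: Gibbs-weighted barycenter of the restriction of the density `ρ`
to the set `Q`, with weight `exp(−αG)`. -/
def consensus {d : ℕ} (G : EuclideanSpace ℝ (Fin d) → ℝ) (α : ℝ)
    (ρ : EuclideanSpace ℝ (Fin d) → ℝ) (Q : Set (EuclideanSpace ℝ (Fin d))) :
    EuclideanSpace ℝ (Fin d) :=
  (∫ θ in Q, Real.exp (-α * G θ) * ρ θ)⁻¹ •
    ∫ θ in Q, (Real.exp (-α * G θ) * ρ θ) • θ

/-!
Both consensus points are quotients `m = N⁻¹ V` of a Gibbs moment `V = ∫_Q e^{-αG} ρ θ` by a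
Gibbs mass `N = ∫_Q e^{-αG} ρ`. On `Q ⊆ B_R(0)` the growth bound keeps the weight `e^{-αG}` above
`e^{-α(inf G + C₁(1+R²))}`, so both masses are at least `n = e^{-α(inf G + C₁(1+R²))} c`, while
`‖V‖ ≤ e^{-α inf G} R`. Writing `m - m̃ = N⁻¹(V - Ṽ) + (N⁻¹ - Ñ⁻¹)Ṽ` reduces the claim to bounds
on `‖V - Ṽ‖` and `|N - Ñ|`, and both are instances of the auxiliary estimate, with the test
functions `e^{-αG} θ` and `e^{-αG} e` for a unit vector `e`.
-/

open Real Set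

lemma W2_nonneg {d : ℕ} (μ ν : Measure (EuclideanSpace ℝ (Fin d))) : 0 ≤ W2 μ ν :=
  Real.sInf_nonneg fun _ ⟨_, _, _, hc⟩ => hc ▸ Real.sqrt_nonneg _

lemma norm_inv_smul_sub_inv_smul_le {E : Type*} [SeminormedAddCommGroup E] [NormedSpace ℝ E]
    {N N' n B : ℝ} {V V' : E} (hn : 0 < n) (hN : n ≤ N) (hN' : n ≤ N') (hV' : ‖V'‖ ≤ B) :
    ‖N⁻¹ • V - N'⁻¹ • V'‖ ≤ n⁻¹ * ‖V - V'‖ + (n ^ 2)⁻¹ * |N - N'| * B := by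
  have hN0 : 0 < N := hn.trans_le hN
  have hN'0 : 0 < N' := hn.trans_le hN'
  have hinv : |N⁻¹ - N'⁻¹| ≤ (n ^ 2)⁻¹ * |N - N'| := by
    rw [inv_sub_inv hN0.ne' hN'0.ne', abs_div, abs_of_pos (mul_pos hN0 hN'0), abs_sub_comm,
      div_eq_inv_mul]
    gcongr
    nlinarith
  calc ‖N⁻¹ • V - N'⁻¹ • V'‖ = ‖N⁻¹ • (V - V') + (N⁻¹ - N'⁻¹) • V'‖ := by
        rw [smul_sub, sub_smul, sub_add_sub_cancel]
    _ ≤ N⁻¹ * ‖V - V'‖ + |N⁻¹ - N'⁻¹| * ‖V'‖ := by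
        refine (norm_add_le _ _).trans_eq ?_
        rw [norm_smul, norm_smul, norm_eq_abs, norm_eq_abs, abs_of_pos (inv_pos.mpr hN0)]
    _ ≤ n⁻¹ * ‖V - V'‖ + (n ^ 2)⁻¹ * |N - N'| * B := by gcongr

section SetIntegral

variable {X : Type*} [MeasurableSpace X] {μ : Measure X} {ρ : X → ℝ} {Q : Set X}

lemma mul_setIntegral_le_setIntegral_mul {w : X → ℝ} {m : ℝ} (hρ : Integrable ρ μ)
    (hwρ : Integrable (fun x => w x * ρ x) μ) (hQ : MeasurableSet Q)
    (hρ0 : ∀ x ∈ Q, 0 ≤ ρ x) (hw : ∀ x ∈ Q, m ≤ w x) :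
    m * ∫ x in Q, ρ x ∂μ ≤ ∫ x in Q, w x * ρ x ∂μ := by
  rw [← integral_const_mul]
  exact setIntegral_mono_on (hρ.const_mul m).integrableOn hwρ.integrableOn hQ
    fun x hx => mul_le_mul_of_nonneg_right (hw x hx) (hρ0 x hx)

lemma norm_setIntegral_le_mul_integral {F : Type*} [NormedAddCommGroup F] [NormedSpace ℝ F]
    {f : X → F} {M : ℝ} (hρ : Integrable ρ μ) (hρ0 : ∀ x, 0 ≤ ρ x) (hM : 0 ≤ M)
    (hQ : MeasurableSet Q) (hf : ∀ x ∈ Q, ‖f x‖ ≤ M * ρ x) :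
    ‖∫ x in Q, f x ∂μ‖ ≤ M * ∫ x, ρ x ∂μ :=
  calc ‖∫ x in Q, f x ∂μ‖ ≤ ∫ x in Q, M * ρ x ∂μ :=
        norm_integral_le_of_norm_le (hρ.const_mul M).integrableOn
          ((ae_restrict_iff' hQ).mpr (ae_of_all _ hf))
    _ = M * ∫ x in Q, ρ x ∂μ := integral_const_mul M _
    _ ≤ M * ∫ x, ρ x ∂μ :=
        mul_le_mul_of_nonneg_left (setIntegral_le_integral hρ (ae_of_all _ hρ0)) hM

end SetIntegral

section GibbsWeight

variable {X : Type*} {G : X → ℝ} {α : ℝ}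

lemma exp_neg_mul_le_exp_neg_mul_sInf (hG : BddBelow (range G)) (hα : 0 ≤ α) (x : X) :
    exp (-α * G x) ≤ exp (-α * sInf (range G)) :=
  exp_le_exp.mpr <| by nlinarith [csInf_le hG (mem_range_self x)]

lemma norm_exp_neg_mul_smul_le {F : Type*} [SeminormedAddCommGroup F] [NormedSpace ℝ F]
    (hG : BddBelow (range G)) (hα : 0 ≤ α) (x : X) (v : F) :
    ‖exp (-α * G x) • v‖ ≤ exp (-α * sInf (range G)) * ‖v‖ := by
  rw [norm_smul, norm_of_nonneg (exp_pos _).le]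
  exact mul_le_mul_of_nonneg_right (exp_neg_mul_le_exp_neg_mul_sInf hG hα x) (norm_nonneg v)

lemma integrable_exp_neg_mul_mul [MeasurableSpace X] {μ : Measure X} {ρ : X → ℝ}
    (hG : Measurable G) (hGb : BddBelow (range G)) (hα : 0 ≤ α) (hρ : Integrable ρ μ) :
    Integrable (fun x => exp (-α * G x) * ρ x) μ :=
  hρ.bdd_mul (by fun_prop) (ae_of_all _ fun x => by
    rw [norm_of_nonneg (exp_pos _).le]
    exact exp_neg_mul_le_exp_neg_mul_sInf hGb hα x)

lemma exp_neg_mul_ge_of_growth [SeminormedAddCommGroup X] {C₁ R : ℝ} (hα : 0 ≤ α)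
    (hC₁ : 0 ≤ C₁) (hgrowth : ∀ θ, G θ - sInf (range G) ≤ C₁ * (1 + ‖θ‖ ^ 2)) {θ : X}
    (hθ : ‖θ‖ ≤ R) :
    exp (-α * (sInf (range G) + C₁ * (1 + R ^ 2))) ≤ exp (-α * G θ) := by
  have : ‖θ‖ ^ 2 ≤ R ^ 2 := pow_le_pow_left₀ (norm_nonneg θ) hθ 2
  exact exp_le_exp.mpr <| by nlinarith [hgrowth θ, mul_le_mul_of_nonneg_left this hC₁]

end GibbsWeight

section Gibbs

variable {E : Type*} [NormedAddCommGroup E] [MeasurableSpace E]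
  {μ : Measure E} {G : E → ℝ} {α : ℝ} {ρ : E → ℝ} {Q : Set E}

/-- `consensus G α ρ Q` unfolds to
`(gibbsMass volume G α ρ Q)⁻¹ • gibbsMoment volume G α ρ Q`. -/
def gibbsMass (μ : Measure E) (G : E → ℝ) (α : ℝ) (ρ : E → ℝ) (Q : Set E) : ℝ :=
  ∫ θ in Q, exp (-α * G θ) * ρ θ ∂μ

lemma mul_le_gibbsMass {C₁ R c : ℝ} (hG : Measurable G) (hGb : BddBelow (range G))
    (hα : 0 ≤ α) (hC₁ : 0 ≤ C₁) (hgrowth : ∀ θ, G θ - sInf (range G) ≤ C₁ * (1 + ‖θ‖ ^ 2))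
    (hρ : Integrable ρ μ) (hρ0 : ∀ θ, 0 ≤ ρ θ) (hQ : MeasurableSet Q)
    (hQR : Q ⊆ closedBall 0 R) (hc : c ≤ ∫ θ in Q, ρ θ ∂μ) :
    exp (-α * (sInf (range G) + C₁ * (1 + R ^ 2))) * c ≤ gibbsMass μ G α ρ Q :=
  (mul_le_mul_of_nonneg_left hc (exp_pos _).le).trans <|
    mul_setIntegral_le_setIntegral_mul hρ (integrable_exp_neg_mul_mul hG hGb hα hρ) hQ
      (fun θ _ => hρ0 θ) fun _ hθ =>
        exp_neg_mul_ge_of_growth hα hC₁ hgrowth (mem_closedBall_zero_iff.mp (hQR hθ))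

variable [NormedSpace ℝ E]

def gibbsMoment (μ : Measure E) (G : E → ℝ) (α : ℝ) (ρ : E → ℝ) (Q : Set E) : E :=
  ∫ θ in Q, (exp (-α * G θ) * ρ θ) • θ ∂μ

lemma norm_gibbsMoment_le {R : ℝ} (hGb : BddBelow (range G)) (hα : 0 ≤ α) (hR : 0 ≤ R)
    (hρ : Integrable ρ μ) (hρ0 : ∀ θ, 0 ≤ ρ θ) (hρ1 : ∫ θ, ρ θ ∂μ = 1)
    (hQ : MeasurableSet Q) (hQR : Q ⊆ closedBall 0 R) :
    ‖gibbsMoment μ G α ρ Q‖ ≤ exp (-α * sInf (range G)) * R := by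
  refine (norm_setIntegral_le_mul_integral (M := exp (-α * sInf (range G)) * R) hρ hρ0
    (by positivity) hQ fun θ hθ => ?_).trans_eq (by rw [hρ1, mul_one])
  rw [norm_smul, norm_of_nonneg (mul_nonneg (exp_pos _).le (hρ0 θ)), mul_right_comm]
  exact mul_le_mul_of_nonneg_right (mul_le_mul (exp_neg_mul_le_exp_neg_mul_sInf hGb hα θ)
    (mem_closedBall_zero_iff.mp (hQR hθ)) (norm_nonneg θ) (exp_pos _).le) (hρ0 θ)

lemma setIntegral_smul_exp_smul_self :
    ∫ θ in Q, ρ θ • (exp (-α * G θ) • θ) ∂μ = gibbsMoment μ G α ρ Q := by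
  simp only [gibbsMoment, smul_smul, mul_comm (ρ _)]

lemma setIntegral_smul_exp_smul_const [CompleteSpace E] (e : E) :
    ∫ θ in Q, ρ θ • (exp (-α * G θ) • e) ∂μ = gibbsMass μ G α ρ Q • e := by
  rw [gibbsMass, ← integral_smul_const]
  simp only [smul_smul, mul_comm (ρ _)]

end Gibbs

theorem consensus_point_stability_general {d : ℕ}
    (G : EuclideanSpace ℝ (Fin d) → ℝ) (hG : Continuous G)
    (hGbdd : BddBelow (Set.range G)) (C₁ : ℝ) (hC₁ : 0 < C₁)
    (hgrowth : ∀ θ, G θ - sInf (Set.range G) ≤ C₁ * (1 + ‖θ‖ ^ 2))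
    (R K c α : ℝ) (hR : 0 < R) (hc : 0 < c) (hα : 0 < α)
    (Ctil : ℝ → ℝ) :
    ∃ C : ℝ, 0 < C ∧
      ∀ (ρ ρt : EuclideanSpace ℝ (Fin d) → ℝ)
        (Q Qt : Set (EuclideanSpace ℝ (Fin d))),
        Measurable ρ → Measurable ρt →
        (∀ θ, 0 ≤ ρ θ) → (∀ θ, 0 ≤ ρt θ) →
        (∫ θ, ρ θ) = 1 → (∫ θ, ρt θ) = 1 →
        MemLp ρ ⊤ volume → MemLp ρt ⊤ volume →
        (∫ θ, ‖θ‖ ^ 2 * ρ θ) ≤ K → (∫ θ, ‖θ‖ ^ 2 * ρt θ) ≤ K →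
        MeasurableSet Q → MeasurableSet Qt →
        Q ⊆ closedBall (0 : EuclideanSpace ℝ (Fin d)) R →
        Qt ⊆ closedBall (0 : EuclideanSpace ℝ (Fin d)) R →
        c ≤ ∫ θ in Q, ρ θ → c ≤ ∫ θ in Qt, ρt θ →
        (∀ (M : ℝ) (f : EuclideanSpace ℝ (Fin d) → EuclideanSpace ℝ (Fin d)),
          0 ≤ M → Measurable f →
          (∀ θ ∈ closedBall (0 : EuclideanSpace ℝ (Fin d)) R, ‖f θ‖ ≤ M) →
          ‖(∫ θ in Q, ρ θ • f θ) - ∫ θ in Qt, ρt θ • f θ‖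
            ≤ Ctil M *
              (Real.sqrt (∫ θ in closedBall (0 : EuclideanSpace ℝ (Fin d)) R,
                  (ρ θ - ρt θ) ^ 2)
                + W2 (volume.withDensity fun θ => ENNReal.ofReal (ρ θ))
                    (volume.withDensity fun θ => ENNReal.ofReal (ρt θ)))) →
        ‖consensus G α ρ Q - consensus G α ρt Qt‖
          ≤ C * (Real.sqrt (∫ θ in closedBall (0 : EuclideanSpace ℝ (Fin d)) R,
                  (ρ θ - ρt θ) ^ 2)
              + W2 (volume.withDensity fun θ => ENNReal.ofReal (ρ θ))
                  (volume.withDensity fun θ => ENNReal.ofReal (ρt θ))) := by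
  set W := exp (-α * sInf (range G))
  set n := exp (-α * (sInf (range G) + C₁ * (1 + R ^ 2))) * c
  have hn : 0 < n := by positivity
  refine ⟨n⁻¹ * |Ctil (W * R)| + (n ^ 2)⁻¹ * |Ctil W| * (W * R) + 1, by positivity, ?_⟩
  intro ρ ρt Q Qt _ _ hρ0 hρt0 hρ1 hρt1 _ _ _ _ hQ hQt hQR hQtR hQc hQtc haux
  set D := √(∫ θ in closedBall 0 R, (ρ θ - ρt θ) ^ 2) + W2 (volume.withDensity fun θ =>
    ENNReal.ofReal (ρ θ)) (volume.withDensity fun θ => ENNReal.ofReal (ρt θ))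
  have hD : 0 ≤ D := add_nonneg (sqrt_nonneg _) (W2_nonneg _ _)
  rcases subsingleton_or_nontrivial (EuclideanSpace ℝ (Fin d)) with _ | _
  · rw [Subsingleton.elim (consensus G α ρ Q) (consensus G α ρt Qt), sub_self, norm_zero]
    exact mul_nonneg (by positivity) hD
  obtain ⟨e, he⟩ := exists_norm_eq (EuclideanSpace ℝ (Fin d)) zero_le_one
  have hρ : Integrable ρ := .of_integral_ne_zero (by simp [hρ1])
  have hρt : Integrable ρt := .of_integral_ne_zero (by simp [hρt1])
  have hΔmoment : ‖gibbsMoment volume G α ρ Q - gibbsMoment volume G α ρt Qt‖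
      ≤ |Ctil (W * R)| * D := by
    have := haux (W * R) (fun θ => exp (-α * G θ) • θ) (by positivity) (by fun_prop)
      fun θ hθ => (norm_exp_neg_mul_smul_le hGbdd hα.le θ θ).trans <| by
        gcongr; exact mem_closedBall_zero_iff.mp hθ
    simp only [setIntegral_smul_exp_smul_self] at this
    exact this.trans (mul_le_mul_of_nonneg_right (le_abs_self _) hD)
  have hΔmass : |gibbsMass volume G α ρ Q - gibbsMass volume G α ρt Qt| ≤ |Ctil W| * D := by
    have := haux W (fun θ => exp (-α * G θ) • e) (by positivity) (by fun_prop) fun θ _ =>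
      (norm_exp_neg_mul_smul_le hGbdd hα.le θ e).trans_eq (by rw [he, mul_one])
    rw [setIntegral_smul_exp_smul_const, setIntegral_smul_exp_smul_const, ← sub_smul,
      norm_smul, he, mul_one, norm_eq_abs] at this
    exact this.trans (mul_le_mul_of_nonneg_right (le_abs_self _) hD)
  calc ‖consensus G α ρ Q - consensus G α ρt Qt‖
      ≤ n⁻¹ * ‖gibbsMoment volume G α ρ Q - gibbsMoment volume G α ρt Qt‖
        + (n ^ 2)⁻¹ * |gibbsMass volume G α ρ Q - gibbsMass volume G α ρt Qt| * (W * R) :=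
        norm_inv_smul_sub_inv_smul_le hn
          (mul_le_gibbsMass hG.measurable hGbdd hα.le hC₁.le hgrowth hρ hρ0 hQ hQR hQc)
          (mul_le_gibbsMass hG.measurable hGbdd hα.le hC₁.le hgrowth hρt hρt0 hQt hQtR hQtc)
          (norm_gibbsMoment_le hGbdd hα.le hR.le hρt hρt0 hρt1 hQt hQtR)
    _ ≤ n⁻¹ * (|Ctil (W * R)| * D) + (n ^ 2)⁻¹ * (|Ctil W| * D) * (W * R) := by gcongr
    _ ≤ (n⁻¹ * |Ctil (W * R)| + (n ^ 2)⁻¹ * |Ctil W| * (W * R) + 1) * D := by nlinarith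

/-- Stability of the consensus point. Under a growth condition on `G`,
second-moment and mass bounds on the densities, and the auxiliary estimate (with constants
`C̃(M)`) controlling set integrals over the quantile sets, the consensus points satisfy
`‖m[ρ] − m[ρ̃]‖ ≤ C (‖ρ − ρ̃‖_{L²(B_R(0))} + W₂(ρ, ρ̃))`, with `C` depending only on
`R, K, c, α` and `C̃`. -/
theorem consensus_point_stability {d : ℕ}
    (G : EuclideanSpace ℝ (Fin d) → ℝ) (hG : Continuous G)
    (hGbdd : BddBelow (Set.range G)) (C₁ : ℝ) (hC₁ : 0 < C₁)
    (hgrowth : ∀ θ, G θ - sInf (Set.range G) ≤ C₁ * (1 + ‖θ‖ ^ 2))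
    (R K c α : ℝ) (hR : 0 < R) (hK : 0 < K) (hc : 0 < c) (hα : 0 < α)
    (Ctil : ℝ → ℝ) :
    ∃ C : ℝ, 0 < C ∧
      ∀ (ρ ρt : EuclideanSpace ℝ (Fin d) → ℝ)
        (Q Qt : Set (EuclideanSpace ℝ (Fin d))),
        Measurable ρ → Measurable ρt →
        (∀ θ, 0 ≤ ρ θ) → (∀ θ, 0 ≤ ρt θ) →
        (∫ θ, ρ θ) = 1 → (∫ θ, ρt θ) = 1 →
        MemLp ρ ⊤ volume → MemLp ρt ⊤ volume →
        (∫ θ, ‖θ‖ ^ 2 * ρ θ) ≤ K → (∫ θ, ‖θ‖ ^ 2 * ρt θ) ≤ K →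
        MeasurableSet Q → MeasurableSet Qt →
        Q ⊆ closedBall (0 : EuclideanSpace ℝ (Fin d)) R →
        Qt ⊆ closedBall (0 : EuclideanSpace ℝ (Fin d)) R →
        c ≤ ∫ θ in Q, ρ θ → c ≤ ∫ θ in Qt, ρt θ →
        (∀ (M : ℝ) (f : EuclideanSpace ℝ (Fin d) → EuclideanSpace ℝ (Fin d)),
          0 ≤ M → Measurable f →
          (∀ θ ∈ closedBall (0 : EuclideanSpace ℝ (Fin d)) R, ‖f θ‖ ≤ M) →
          ‖(∫ θ in Q, ρ θ • f θ) - ∫ θ in Qt, ρt θ • f θ‖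
            ≤ Ctil M *
              (Real.sqrt (∫ θ in closedBall (0 : EuclideanSpace ℝ (Fin d)) R,
                  (ρ θ - ρt θ) ^ 2)
                + W2 (volume.withDensity fun θ => ENNReal.ofReal (ρ θ))
                    (volume.withDensity fun θ => ENNReal.ofReal (ρt θ)))) →
        ‖consensus G α ρ Q - consensus G α ρt Qt‖
          ≤ C * (Real.sqrt (∫ θ in closedBall (0 : EuclideanSpace ℝ (Fin d)) R,
                  (ρ θ - ρt θ) ^ 2)
              + W2 (volume.withDensity fun θ => ENNReal.ofReal (ρ θ))
                  (volume.withDensity fun θ => ENNReal.ofReal (ρt θ))) :=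
  consensus_point_stability_general G hG hGbdd C₁ hC₁ hgrowth R K c α hR hc hα Ctil

end
end
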